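/- The map $\varphi : \mathbb{C}^2\setminus\{0\} \to \ell^2$ given by $\varphi(z_1,z_2) = \left(\sqrt{\tfrac{j+k}{j!\,k!}}\,z_1^j z_2^k\right)_{j+k \ge 1}$ satisfies $\sum_{j+k\ge 1}\frac{j+k}{j!\,k!}|z_1|^{2j}|z_2|^{2k} = e^{|z|^2}|z|^2$ where $|z|^2 = |z_1|^2+|z_2|^2$; in particular, $\log\|\varphi(z)\|^2 = |z|^2 + \log|z|^2$. -/

import Mathlib

/-!
With `a = ‖z₁‖²`, `b = ‖z₂‖²`, split `(j + k) / (j! k!) aʲ bᵏ` as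
`(j aʲ / j!) (bᵏ / k!) + (aʲ / j!) (k bᵏ / k!)`: the double series becomes a sum of products of
`∑ aⁿ / n! = eᵃ` and `∑ n aⁿ / n! = a eᵃ`, hence equals `(a + b) eᵃ⁺ᵇ`. The `(0, 0)` term is zero,
so restricting to `j + k ≥ 1` changes nothing, and the logarithm follows once `a + b > 0`.
-/

open Real

section
open Nat

theorem Real.hasSum_pow_div_factorial (x : ℝ) : HasSum (fun n : ℕ => x ^ n / n !) (exp x) := by
  rw [exp_eq_exp_ℝ]
  exact NormedSpace.expSeries_div_hasSum_exp x

theorem Real.hasSum_natCast_mul_pow_div_factorial (x : ℝ) :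
    HasSum (fun n : ℕ => n * x ^ n / n !) (x * exp x) := by
  have hshift (n : ℕ) : ((n + 1 : ℕ) : ℝ) * x ^ (n + 1) / (n + 1)! = x * (x ^ n / n !) := by
    rw [factorial_succ]
    push_cast
    field_simp
    ring
  rw [← hasSum_nat_add_iff' 1]
  simp only [hshift, Finset.range_one, Finset.sum_singleton, CharP.cast_eq_zero, zero_mul,
    zero_div, sub_zero]
  exact (hasSum_pow_div_factorial x).mul_left x

theorem Real.hasSum_add_mul_div_factorial_mul_pow_mul_pow (a b : ℝ) :
    HasSum (fun p : ℕ × ℕ => (p.1 + p.2 : ℝ) / (p.1 ! * p.2 !) * a ^ p.1 * b ^ p.2)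
      (exp (a + b) * (a + b)) := by
  have hprod {f g : ℕ → ℝ} {s t : ℝ} (hf : HasSum f s) (hg : HasSum g t) :
      HasSum (fun p : ℕ × ℕ => f p.1 * g p.2) (s * t) :=
    hf.mul hg (summable_mul_of_summable_norm (summable_abs_iff.mpr hf.summable)
      (summable_abs_iff.mpr hg.summable))
  have hsplit := (hprod (hasSum_natCast_mul_pow_div_factorial a) (hasSum_pow_div_factorial b)).add
    (hprod (hasSum_pow_div_factorial a) (hasSum_natCast_mul_pow_div_factorial b))
  rw [exp_add]
  convert hsplit using 1
  · funext p
    field_simp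
  · ring

theorem Real.hasSum_add_mul_div_factorial_mul_pow_mul_pow_of_one_le_add (a b : ℝ) :
    HasSum (fun p : {p : ℕ × ℕ // 1 ≤ p.1 + p.2} =>
        (p.1.1 + p.1.2 : ℝ) / (p.1.1 ! * p.1.2 !) * a ^ p.1.1 * b ^ p.1.2)
      (exp (a + b) * (a + b)) := by
  refine (hasSum_subtype_iff_of_support_subset (s := {p | 1 ≤ p.1 + p.2}) fun p hp => ?_).mpr
    (hasSum_add_mul_div_factorial_mul_pow_mul_pow a b)
  by_contra hp0
  obtain ⟨h1, h2⟩ : p.1 = 0 ∧ p.2 = 0 := by simpa using hp0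
  simp [h1, h2] at hp

end

theorem simanca_coherent_states_norm (z₁ z₂ : ℂ) :
    (∑' p : {p : ℕ × ℕ // 1 ≤ p.1 + p.2},
        ((p.1.1 + p.1.2 : ℝ) / (p.1.1.factorial * p.1.2.factorial))
          * ‖z₁‖^(2*p.1.1) * ‖z₂‖^(2*p.1.2)
      = Real.exp (‖z₁‖^2 + ‖z₂‖^2)
          * (‖z₁‖^2 + ‖z₂‖^2))
    ∧ ((z₁, z₂) ≠ (0, 0) →
        Real.log (∑' p : {p : ℕ × ℕ // 1 ≤ p.1 + p.2},
          ((p.1.1 + p.1.2 : ℝ) / (p.1.1.factorial * p.1.2.factorial))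
            * ‖z₁‖^(2*p.1.1) * ‖z₂‖^(2*p.1.2))
        = (‖z₁‖^2 + ‖z₂‖^2)
            + Real.log (‖z₁‖^2 + ‖z₂‖^2)) := by
  have hsum : ∑' p : {p : ℕ × ℕ // 1 ≤ p.1 + p.2},
      ((p.1.1 + p.1.2 : ℝ) / (p.1.1.factorial * p.1.2.factorial))
        * ‖z₁‖^(2*p.1.1) * ‖z₂‖^(2*p.1.2) = exp (‖z₁‖^2 + ‖z₂‖^2) * (‖z₁‖^2 + ‖z₂‖^2) := by
    simp_rw [pow_mul]
    exact (hasSum_add_mul_div_factorial_mul_pow_mul_pow_of_one_le_add _ _).tsum_eq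
  refine ⟨hsum, fun hz => ?_⟩
  have hpos : 0 < ‖z₁‖^2 + ‖z₂‖^2 := by
    obtain h | h : z₁ ≠ 0 ∨ z₂ ≠ 0 := by
      simpa only [ne_eq, Prod.mk.injEq, not_and_or] using hz
    · have := norm_pos_iff.mpr h
      positivity
    · have := norm_pos_iff.mpr h
      positivity
  rw [hsum, log_mul (exp_pos _).ne' hpos.ne', log_exp]
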